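/- For every n ≥ 2, the uniform probability distribution on the set of simple graphs with vertex set {1,...,n} having an even number of edges is the induced distribution of some coloring model on n vertices. -/

import Mathlib

open scoped Classical

structure ColoringModel (n : ℕ) where
  Ω : Fin n → Type
  fin : ∀ v, Fintype (Ω v)
  p : ∀ v, Ω v → ℝ
  nonneg : ∀ v ω, 0 ≤ p v ω
  sum_one : ∀ v, ∑ ω ∈ @Finset.univ (Ω v) (fin v), p v ω = 1
  f : ∀ u v : Fin n, Ω u → Ω v → Bool
  symm : ∀ u v x y, f u v x y = f v u y x

def ColoringModel.graph {n : ℕ} (M : ColoringModel n) (ω : ∀ v, M.Ω v) :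
    SimpleGraph (Fin n) where
  Adj u v := u ≠ v ∧ M.f u v (ω u) (ω v) = true
  symm := ⟨by
    rintro u v ⟨h1, h2⟩
    refine ⟨h1.symm, ?_⟩
    rw [M.symm]
    exact h2⟩
  loopless := ⟨fun u h => h.1 rfl⟩

noncomputable def ColoringModel.pr {n : ℕ} (M : ColoringModel n)
    (P : SimpleGraph (Fin n) → Prop) : ℝ :=
  letI := M.fin
  ∑ ω : (∀ v, M.Ω v), if P (M.graph ω) then ∏ v, M.p v (ω v) else 0

noncomputable def ColoringModel.dist {n : ℕ} (M : ColoringModel n)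
    (G : SimpleGraph (Fin n)) : ℝ :=
  M.pr (fun H => H = G)

noncomputable def evenEdgeUniform (n : ℕ) : SimpleGraph (Fin n) → ℝ := fun G =>
  if Even (Nat.card G.edgeSet) then
    (1 : ℝ) /
      ((Finset.univ.filter
        (fun H : SimpleGraph (Fin n) => Even (Nat.card H.edgeSet))).card : ℝ)
  else 0

open Finset

/-! Color every vertex by a uniform vector `x ∈ 𝔽₂^V`. Vertex `u` puts `x v` on the edge `uv`,
except on the edge to its buffer vertex, which receives the sum of all other values `u` puts out;
an edge is present iff the values its two endpoints put on it sum to `1`. Every vertex thus puts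
out an even total, so every sampled graph has an even number of edges. The map from colorings to
adjacency matrices over `𝔽₂` is additive, so its nonempty fibres all have the same size, and its
image is exactly the even graphs: an explicit coloring realizes a given graph on every pair but
the buffer edge `rs`, where parity forces the right value. -/

theorem eq_ite_one_div_card_of_sum_eq_one {α K : Type*} [Fintype α] [DivisionSemiring K]
    {f : α → K} {S : Finset α} (hsum : ∑ a, f a = 1) (hS : ∀ a ∈ S, ∀ b ∈ S, f a = f b)
    (hSc : ∀ a ∉ S, f a = 0) (a : α) : f a = if a ∈ S then 1 / (#S : K) else 0 := by
  split_ifs with ha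
  · refine eq_one_div_of_mul_eq_one_right ?_
    rw [← hsum, ← sum_subset (subset_univ S) fun b _ hb => hSc b hb,
      sum_congr rfl fun b hb => hS b hb a ha, sum_const, nsmul_eq_mul]
  · exact hSc a ha

section EdgeMatrix

variable {V : Type*} [DecidableEq V]

def buffer (r s u : V) : V := if u = r then s else r

theorem buffer_self (r s : V) : buffer r s r = s := if_pos rfl

theorem buffer_of_ne {r u : V} (s : V) (hu : u ≠ r) : buffer r s u = r := if_neg hu

theorem buffer_ne {r s : V} (hrs : r ≠ s) (u : V) : buffer r s u ≠ u := by
  by_cases hu : u = r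
  · rw [hu, buffer_self]
    exact hrs.symm
  · rw [buffer_of_ne s hu]
    exact Ne.symm hu

variable [Fintype V]

/-- What vertex `u` with color `x` and buffer vertex `b` puts on the edge `uv`. -/
def share (b u : V) (x : V → ZMod 2) (v : V) : ZMod 2 :=
  if v = b then ∑ w ∈ {u, b}ᶜ, x w else x v

theorem share_self (b u : V) (x : V → ZMod 2) : share b u x b = ∑ w ∈ {u, b}ᶜ, x w :=
  if_pos rfl

theorem share_of_ne {b v : V} (u : V) (x : V → ZMod 2) (hv : v ≠ b) : share b u x v = x v :=
  if_neg hv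

theorem share_add (b u : V) (x y : V → ZMod 2) (v : V) :
    share b u (x + y) v = share b u x v + share b u y v := by
  unfold share
  split_ifs <;> simp [sum_add_distrib]

theorem sum_share_erase {b u : V} (hb : b ≠ u) (x : V → ZMod 2) :
    ∑ v ∈ univ.erase u, share b u x v = 0 := by
  have hrest : (univ.erase u).erase b = {u, b}ᶜ := by ext; simp [and_comm]
  rw [← add_sum_erase _ _ (mem_erase.2 ⟨hb, mem_univ b⟩), hrest, share_self,
    sum_congr rfl fun v hv => share_of_ne u x (by simp_all), CharTwo.add_self_eq_zero]

def edgeMatrix (b : V → V) : (V → V → ZMod 2) →+ Matrix V V (ZMod 2) where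
  toFun ω := Matrix.of fun u v => share (b u) u (ω u) v + share (b v) v (ω v) u
  map_zero' := by ext; simp [share]
  map_add' ω κ := by
    ext u v
    simp only [Matrix.of_apply, Pi.add_apply, share_add, Matrix.add_apply]
    ring

theorem edgeMatrix_apply (b : V → V) (ω : V → V → ZMod 2) (u v : V) :
    edgeMatrix b ω u v = share (b u) u (ω u) v + share (b v) v (ω v) u := rfl

theorem edgeMatrix_isSymm (b : V → V) (ω : V → V → ZMod 2) : (edgeMatrix b ω).IsSymm :=
  Matrix.IsSymm.ext fun _ _ => add_comm _ _

theorem edgeMatrix_apply_self (b : V → V) (ω : V → V → ZMod 2) (u : V) :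
    edgeMatrix b ω u u = 0 :=
  CharTwo.add_self_eq_zero _

end EdgeMatrix

section StrictUpperSum

variable {V R : Type*} [Fintype V] [LinearOrder V]

def strictUpperSum [AddCommMonoid R] (A : Matrix V V R) : R :=
  ∑ p ∈ univ.offDiag with p.1 < p.2, A p.1 p.2

theorem SimpleGraph.card_edgeFinset_eq_strictUpperSum [NonAssocSemiring R] (G : SimpleGraph V)
    [DecidableRel G.Adj] : (#G.edgeFinset : R) = strictUpperSum (G.adjMatrix R) := by
  have hE : G.edgeFinset = {e ∈ (univ : Finset V).sym2 | ¬e.IsDiag ∧ e ∈ G.edgeSet} := by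
    ext e
    simp only [SimpleGraph.mem_edgeFinset, mem_filter, mem_sym2_iff, mem_univ, implies_true,
      true_and]
    exact ⟨fun h => ⟨G.not_isDiag_of_mem_edgeSet h, h⟩, And.right⟩
  rw [strictUpperSum, hE, ← filter_filter, ← sum_boole, sum_sym2_filter_not_isDiag]
  simp [SimpleGraph.adjMatrix_apply]

theorem SimpleGraph.even_card_edgeSet_iff (G : SimpleGraph V) [DecidableRel G.Adj] :
    Even (Nat.card G.edgeSet) ↔ strictUpperSum (G.adjMatrix (ZMod 2)) = 0 := by
  rw [Nat.card_eq_fintype_card, ← edgeFinset_card, ← ZMod.natCast_eq_zero_iff_even,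
    card_edgeFinset_eq_strictUpperSum]

theorem strictUpperSum_add_transpose [AddCommMonoid R] (A : Matrix V V R) :
    strictUpperSum (A + A.transpose) = ∑ u, ∑ v ∈ univ.erase u, A u v := by
  have hswap : ∑ p ∈ univ.offDiag with p.1 < p.2, A p.2 p.1
      = ∑ p ∈ univ.offDiag with ¬p.1 < p.2, A p.1 p.2 := by
    exact sum_nbij' Prod.swap Prod.swap (fun p => by grind) (fun p => by grind)
      (fun _ _ => rfl) (fun _ _ => rfl) (fun _ _ => rfl)
  rw [strictUpperSum]
  simp only [Matrix.add_apply, Matrix.transpose_apply, sum_add_distrib, hswap,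
    sum_filter_add_sum_filter_not]
  exact sum_finset_product _ _ _ (by simp [eq_comm])

theorem strictUpperSum_edgeMatrix {b : V → V} (hb : ∀ u, b u ≠ u) (ω : V → V → ZMod 2) :
    strictUpperSum (edgeMatrix b ω) = 0 := by
  let C : Matrix V V (ZMod 2) := Matrix.of fun u v => share (b u) u (ω u) v
  change strictUpperSum (C + C.transpose) = 0
  rw [strictUpperSum_add_transpose]
  exact sum_eq_zero fun u _ => sum_share_erase (hb u) (ω u)

theorem Matrix.eq_of_strictUpperSum_eq [AddCancelCommMonoid R] {A B : Matrix V V R} {r s : V}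
    (hrs : r < s) (hA : A.IsSymm) (hB : B.IsSymm) (hsum : strictUpperSum A = strictUpperSum B)
    (h : ∀ u v, ¬(u = r ∧ v = s) → ¬(u = s ∧ v = r) → A u v = B u v) : A = B := by
  have hmem : (r, s) ∈ univ.offDiag.filter fun p => p.1 < p.2 := by simp [hrs, hrs.ne]
  have hrest : ∑ p ∈ (univ.offDiag.filter fun p => p.1 < p.2).erase (r, s), A p.1 p.2
      = ∑ p ∈ (univ.offDiag.filter fun p => p.1 < p.2).erase (r, s), B p.1 p.2 := by
    refine sum_congr rfl fun p hp => h p.1 p.2 ?_ ?_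
    all_goals
      obtain ⟨hne, hp⟩ := mem_erase.1 hp
      grind
  have hrs' : A r s = B r s := by
    rw [strictUpperSum, strictUpperSum, ← add_sum_erase _ _ hmem, ← add_sum_erase _ _ hmem,
      hrest] at hsum
    exact add_right_cancel hsum
  ext u v
  by_cases h1 : u = r ∧ v = s
  · obtain ⟨rfl, rfl⟩ := h1
    exact hrs'
  by_cases h2 : u = s ∧ v = r
  · obtain ⟨rfl, rfl⟩ := h2
    rw [hA.apply, hB.apply]
    exact hrs'
  exact h u v h1 h2

end StrictUpperSum

section Realization

variable {V : Type*} [Fintype V] [LinearOrder V]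

def upperPart (A : Matrix V V (ZMod 2)) (u v : V) : ZMod 2 := if u < v then A u v else 0

/-- Each vertex other than `r` pays for its edges towards larger vertices; `r` also pays, on each
edge `rv`, for what `v` puts on its buffer edge `vr`. -/
def coloringOf (r : V) (A : Matrix V V (ZMod 2)) (u : V) : V → ZMod 2 :=
  if u = r then fun v => A r v + share r v (upperPart A v) r else upperPart A u

theorem coloringOf_self (r : V) (A : Matrix V V (ZMod 2)) :
    coloringOf r A r = fun v => A r v + share r v (upperPart A v) r := if_pos rfl

theorem coloringOf_of_ne {r u : V} (A : Matrix V V (ZMod 2)) (hu : u ≠ r) :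
    coloringOf r A u = upperPart A u := if_neg hu

theorem edgeMatrix_coloringOf_apply_of_ne {r s : V} {A : Matrix V V (ZMod 2)} (hA : A.IsSymm)
    {u v : V} (huv : u ≠ v) (hu : u ≠ r) (hv : v ≠ r) :
    edgeMatrix (buffer r s) (coloringOf r A) u v = A u v := by
  rw [edgeMatrix_apply, buffer_of_ne s hu, buffer_of_ne s hv, share_of_ne _ _ hv,
    share_of_ne _ _ hu, coloringOf_of_ne A hu, coloringOf_of_ne A hv, upperPart, upperPart]
  rcases huv.lt_or_gt with h | h
  · simp [h, h.not_gt]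
  · simp [h, h.not_gt, hA.apply]

theorem edgeMatrix_coloringOf_apply_left {r s : V} (A : Matrix V V (ZMod 2)) {v : V} (hvr : v ≠ r)
    (hvs : v ≠ s) : edgeMatrix (buffer r s) (coloringOf r A) r v = A r v := by
  rw [edgeMatrix_apply, buffer_self, buffer_of_ne s hvr, share_of_ne _ _ hvs, coloringOf_self,
    coloringOf_of_ne A hvr, add_assoc, CharTwo.add_self_eq_zero, add_zero]

theorem adjMatrix_mem_range_edgeMatrix {r s : V} (hrs : r < s) (G : SimpleGraph V)
    [DecidableRel G.Adj] (hG : strictUpperSum (G.adjMatrix (ZMod 2)) = 0) :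
    G.adjMatrix (ZMod 2) ∈ Set.range (edgeMatrix (buffer r s)) := by
  refine ⟨coloringOf r (G.adjMatrix (ZMod 2)), Matrix.eq_of_strictUpperSum_eq hrs
    (edgeMatrix_isSymm _ _) G.isSymm_adjMatrix ?_ fun u v h1 h2 => ?_⟩
  · rw [strictUpperSum_edgeMatrix (buffer_ne hrs.ne), hG]
  by_cases huv : u = v
  · subst huv
    simp [edgeMatrix_apply_self]
  by_cases hu : u = r
  · subst hu
    exact edgeMatrix_coloringOf_apply_left _ (Ne.symm huv) fun h => h1 ⟨rfl, h⟩
  by_cases hv : v = r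
  · subst hv
    rw [(edgeMatrix_isSymm _ _).apply, G.isSymm_adjMatrix.apply]
    exact edgeMatrix_coloringOf_apply_left _ huv fun h => h2 ⟨h, rfl⟩
  exact edgeMatrix_coloringOf_apply_of_ne G.isSymm_adjMatrix huv hu hv

end Realization

theorem ColoringModel.sum_dist {n : ℕ} (M : ColoringModel n) : ∑ G, M.dist G = 1 := by
  let := M.fin
  simp only [ColoringModel.dist, ColoringModel.pr]
  rw [sum_comm]
  simp only [sum_ite_eq, mem_univ, if_true]
  rw [← Fintype.prod_sum]
  exact prod_eq_one fun v _ => M.sum_one v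

noncomputable def ColoringModel.uniform {n : ℕ} (C : Type) [Fintype C] [Nonempty C]
    (f : Fin n → Fin n → C → C → Bool) (hf : ∀ u v x y, f u v x y = f v u y x) :
    ColoringModel n where
  Ω _ := C
  fin _ := inferInstance
  p _ _ := (Fintype.card C : ℝ)⁻¹
  nonneg _ _ := by positivity
  sum_one _ := by simp
  f := f
  symm := hf

theorem ColoringModel.dist_uniform {n : ℕ} {C : Type} [Fintype C] [Nonempty C]
    {f : Fin n → Fin n → C → C → Bool} {hf : ∀ u v x y, f u v x y = f v u y x}
    (G : SimpleGraph (Fin n)) :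
    (uniform C f hf).dist G =
      #{ω : Fin n → C | (uniform C f hf).graph ω = G} * ((Fintype.card C : ℝ)⁻¹) ^ n := by
  simp only [dist, pr, uniform, prod_const, card_univ, Fintype.card_fin]
  rw [← sum_filter, sum_const, nsmul_eq_mul]
  rfl

noncomputable def evenModel {n : ℕ} (r s : Fin n) : ColoringModel n :=
  ColoringModel.uniform (Fin n → ZMod 2)
    (fun u v x y => decide (share (buffer r s u) u x v + share (buffer r s v) v y u = 1))
    fun _ _ _ _ => by rw [add_comm]

theorem evenModel_graph_eq_iff {n : ℕ} {r s : Fin n} (ω : Fin n → Fin n → ZMod 2)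
    (G : SimpleGraph (Fin n)) :
    (evenModel r s).graph ω = G ↔ edgeMatrix (buffer r s) ω = G.adjMatrix (ZMod 2) := by
  have hadj : ∀ u v, ((evenModel r s).graph ω).Adj u v ↔
      u ≠ v ∧ edgeMatrix (buffer r s) ω u v = 1 := fun u v => by
    simp [ColoringModel.graph, evenModel, ColoringModel.uniform, edgeMatrix_apply]
  constructor
  · rintro rfl
    ext u v
    rw [SimpleGraph.adjMatrix_apply, hadj]
    by_cases huv : u = v
    · simp [huv, edgeMatrix_apply_self]
    · rcases (by decide : ∀ x : ZMod 2, x = 0 ∨ x = 1) (edgeMatrix (buffer r s) ω u v)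
        with h | h <;> simp [h, huv]
  · intro h
    ext u v
    rw [hadj, h, SimpleGraph.adjMatrix_apply]
    by_cases hG : G.Adj u v
    · simp [hG, G.ne_of_adj hG]
    · simp [hG]

theorem evenModel_dist {n : ℕ} {r s : Fin n} (G : SimpleGraph (Fin n)) :
    (evenModel r s).dist G =
      #{ω | edgeMatrix (buffer r s) ω = G.adjMatrix (ZMod 2)} * ((2 : ℝ) ^ n)⁻¹ ^ n := by
  rw [evenModel, ColoringModel.dist_uniform, Fintype.card_fun, ZMod.card, Fintype.card_fin]
  push_cast
  congr 3
  exact filter_congr fun ω _ => evenModel_graph_eq_iff ω G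

theorem evenModel_dist_eq_of_even {n : ℕ} {r s : Fin n} (hrs : r < s) {G H : SimpleGraph (Fin n)}
    (hG : strictUpperSum (G.adjMatrix (ZMod 2)) = 0)
    (hH : strictUpperSum (H.adjMatrix (ZMod 2)) = 0) :
    (evenModel r s).dist G = (evenModel r s).dist H := by
  rw [evenModel_dist, evenModel_dist, AddMonoidHom.card_fiber_eq_of_mem_range _
    (adjMatrix_mem_range_edgeMatrix hrs G hG) (adjMatrix_mem_range_edgeMatrix hrs H hH)]

theorem evenModel_dist_eq_zero {n : ℕ} {r s : Fin n} (hrs : r ≠ s) {G : SimpleGraph (Fin n)}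
    (hG : strictUpperSum (G.adjMatrix (ZMod 2)) ≠ 0) : (evenModel r s).dist G = 0 := by
  have hfiber : ∀ ω, edgeMatrix (buffer r s) ω ≠ G.adjMatrix (ZMod 2) := fun ω h =>
    hG (h ▸ strictUpperSum_edgeMatrix (buffer_ne hrs) ω)
  rw [evenModel_dist, filter_false_of_mem fun ω _ => hfiber ω, card_empty, Nat.cast_zero,
    zero_mul]

theorem even_edge_uniform_is_coloring_model (n : ℕ) (hn : 2 ≤ n) :
    ∃ M : ColoringModel n, ∀ G, M.dist G = evenEdgeUniform n G := by
  obtain ⟨r, s, hrs⟩ : ∃ r s : Fin n, r < s :=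
    ⟨⟨0, by omega⟩, ⟨1, hn⟩, Fin.mk_lt_mk.2 Nat.zero_lt_one⟩
  refine ⟨evenModel r s, fun G => (eq_ite_one_div_card_of_sum_eq_one
    (S := {H | Even (Nat.card H.edgeSet)}) (evenModel r s).sum_dist ?_ ?_ G).trans ?_⟩
  · simp only [mem_filter, mem_univ, true_and, SimpleGraph.even_card_edgeSet_iff]
    exact fun G hG H hH => evenModel_dist_eq_of_even hrs hG hH
  · simp only [mem_filter, mem_univ, true_and, SimpleGraph.even_card_edgeSet_iff]
    exact fun G hG => evenModel_dist_eq_zero hrs.ne hG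
  · simp only [evenEdgeUniform, mem_filter, mem_univ, true_and]
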